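/- Every satisfiable BST⊗-conjunction with n distinct variables is fulfilled by an accessible ⊗-graph of size at most 2^n − 1. -/

import Mathlib

namespace BSTO

/-- The unordered Cartesian product `s ⊗ t = {{u,v} | u ∈ s, v ∈ t}`, as a class of ZFC sets. -/
def uprod (s t : ZFSet) : Set ZFSet := {w | ∃ u ∈ s, ∃ v ∈ t, w = ({u, v} : ZFSet)}

/-- A partition: a collection of pairwise disjoint nonempty sets. -/
def IsPartition (S : ZFSet) : Prop :=
  (∀ b, b ∈ S → b ≠ (∅ : ZFSet)) ∧
    ∀ b, b ∈ S → ∀ c, c ∈ S → b ≠ c → ∀ t, t ∈ b → t ∉ c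

/-- `Pow*₁,₂ B`: members of the intersecting power set of `B` of cardinality 1 or 2. -/
def powAst12 (B : ZFSet) : Set ZFSet :=
  {t | t ⊆ ZFSet.sUnion B ∧ (∀ s, s ∈ B → ∃ u, u ∈ t ∧ u ∈ s) ∧ ∃ u v : ZFSet, t = {u, v}}

/-- BST⊗-formulae. -/
inductive Fmla (V : Type) : Type
  | eqUnion (x y z : V)
  | eqInter (x y z : V)
  | eqDiff  (x y z : V)
  | eqUprod (x y z : V)
  | subset  (x y : V)
  | not (φ : Fmla V)
  | and (φ ψ : Fmla V)
  | or (φ ψ : Fmla V)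

def Fmla.Sat {V : Type} (M : V → ZFSet) : Fmla V → Prop
  | .eqUnion x y z => M x = M y ∪ M z
  | .eqInter x y z => M x = M y ∩ M z
  | .eqDiff x y z  => M x = M y \ M z
  | .eqUprod x y z => (M x).toSet = uprod (M y) (M z)
  | .subset x y    => M x ⊆ M y
  | .not φ         => ¬ Fmla.Sat M φ
  | .and φ ψ       => Fmla.Sat M φ ∧ Fmla.Sat M ψ
  | .or φ ψ        => Fmla.Sat M φ ∨ Fmla.Sat M ψ

/-- A partition `S` satisfies `φ` if the set assignment induced by some
partition assignment `J` (mapping variables to sets of blocks) models `φ`. -/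
def SatByPartition {V : Type} (S : ZFSet) (φ : Fmla V) : Prop :=
  ∃ J : V → ZFSet, (∀ v, J v ⊆ S) ∧ Fmla.Sat (fun v => ZFSet.sUnion (J v)) φ

/-- BST literals. -/
inductive BSTLit (V : Type) : Type
  | eqUnion (x y z : V)
  | eqDiff  (x y z : V)
  | ne (x y : V)

def BSTLit.Sat {V : Type} (M : V → ZFSet) : BSTLit V → Prop
  | .eqUnion x y z => M x = M y ∪ M z
  | .eqDiff x y z  => M x = M y \ M z
  | .ne x y        => M x ≠ M y

/-- A map `F : V → pow(pow⁺ V)` fulfills a BST literal. -/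
def BSTLit.FulfilledBy {V : Type} (F : V → Set (Set V)) : BSTLit V → Prop
  | .eqUnion x y z => F x = F y ∪ F z
  | .eqDiff x y z  => F x = F y \ F z
  | .ne x y        => F x ≠ F y

/-- BST⊗ literals. -/
inductive Lit (V : Type) : Type
  | eqUnion (x y z : V)
  | eqDiff  (x y z : V)
  | eqUprod (x y z : V)
  | ne (x y : V)

def Lit.Sat {V : Type} (M : V → ZFSet) : Lit V → Prop
  | .eqUnion x y z => M x = M y ∪ M z
  | .eqDiff x y z  => M x = M y \ M z
  | .eqUprod x y z => (M x).toSet = uprod (M y) (M z)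
  | .ne x y        => M x ≠ M y

/-- The nodes over a set of places: nonempty subsets of cardinality at most 2. -/
def NodesOf (P : Type) : Set (Set P) := {A | ∃ p q : P, A = {p, q}}

/-- Unordered product of two sets of places: the set of nodes `{u,v}`, `u ∈ s`, `v ∈ t`. -/
def setUprod {P : Type} (s t : Set P) : Set (Set P) := {A | ∃ u ∈ s, ∃ v ∈ t, A = {u, v}}

/-- Accessibility of a place from the source places, w.r.t. a target map `T`. -/
inductive Accessible {P : Type} (T : Set P → Set P) : P → Prop
  | source (p : P) (h : ∀ A ∈ NodesOf P, p ∉ T A) : Accessible T p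
  | step (p : P) (A : Set P) (hA : A ∈ NodesOf P)
      (hacc : ∀ q ∈ A, Accessible T q) (hp : p ∈ T A) : Accessible T p

/-- Conditions (a), (b), (c1)-(c3) for a literal, w.r.t. a ⊗-graph with target map `T`
and a candidate fulfilling map `F`. -/
def Lit.GraphFulfilled {P V : Type} (T : Set P → Set P) (F : V → Set P) : Lit V → Prop
  | .eqUnion x y z => F x = F y ∪ F z
  | .eqDiff x y z  => F x = F y \ F z
  | .ne x y        => F x ≠ F y
  | .eqUprod x y z =>
      (∀ υ ∈ F y, ∀ ζ ∈ F z, (T {υ, ζ}).Nonempty ∧ T {υ, ζ} ⊆ F x) ∧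
      F x ⊆ (⋃ A ∈ setUprod (F y) (F z), T A) ∧
      (⋃ A ∈ NodesOf P \ setUprod (F y) (F z), T A) ∩ F x = ∅

/-- A ⊗-graph (given by its target map `T`) fulfills the conjunction `Φ` via `F`. -/
def Fulfills {P V : Type} (T : Set P → Set P) (F : V → Set P) (Φ : List (Lit V)) : Prop :=
  ∀ l ∈ Φ, Lit.GraphFulfilled T F l

/-- `S'` is a ⊗-subpartition of the partition `S`. -/
def OSubpart (S : ZFSet) (S' : Set ZFSet) : Prop :=
  S' ⊆ S.toSet ∧ ∃ B : Set ZFSet,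
    (∀ b ∈ B, ∃ p, p ∈ S ∧ ∃ q, q ∈ S ∧ b = ({p, q} : ZFSet)) ∧
    (⋃ c ∈ S', c.toSet) = ⋃ b ∈ B, powAst12 b

/-- `Σ_⊗`: the maximal ⊗-subpartition of `S` (the union of all ⊗-subpartitions). -/
def sigmaOtimes (S : ZFSet) : Set ZFSet := {b | ∃ S', OSubpart S S' ∧ b ∈ S'}

/-- The target map of the ⊗-graph induced by a partition `S` via the bijection `e`,
relative to the set `Pi` of ⊗-upblocks. -/
def inducedT (S : ZFSet) {P : Type} (e : P ≃ S.toSet) (Pi : Set ZFSet) (A : Set P) :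
    Set P :=
  {q | ∃ p₁ p₂ : P, A = {p₁, p₂} ∧ ({(e p₁ : ZFSet), (e p₂ : ZFSet)} : ZFSet) ∈ Pi ∧
    (e q : ZFSet) ∈ sigmaOtimes S ∧
    ((e q : ZFSet).toSet ∩ powAst12 ({(e p₁ : ZFSet), (e p₂ : ZFSet)} : ZFSet)).Nonempty}

/-- `m` is the maximum of `Sp` w.r.t. the strict order `r`. -/
def IsMaxIn {P : Type} (r : P → P → Prop) (Sp : Set P) (m : P) : Prop :=
  m ∈ Sp ∧ ∀ p ∈ Sp, p = m ∨ r p m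

/-- `r` is a topological ⊗-order for the ⊗-graph with target map `T`:
a strict total order on places with `max A ≺ max T(A)` for every ⊗-node `A`. -/
def IsTopOOrder {P : Type} (T : Set P → Set P) (r : P → P → Prop) : Prop :=
  (∀ a, ¬ r a a) ∧ (∀ a b c, r a b → r b c → r a c) ∧ (∀ a b, a ≠ b → r a b ∨ r b a) ∧
  ∀ A ∈ NodesOf P, (T A).Nonempty →
    ∃ m m', IsMaxIn r A m ∧ IsMaxIn r (T A) m' ∧ r m m'

/-- Hereditarily finite ZFC sets. -/
inductive IsHF : ZFSet → Prop
  | mk (x : ZFSet) (hfin : x.toSet.Finite) (hmem : ∀ y ∈ x, IsHF y) : IsHF x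

/-!
Let `M` be a model. The places are the Venn regions `{v | a ∈ M v}` realized by elements `a`
of the values of `M`; being nonempty, there are at most `2^n - 1` of them. Each variable `x` is
sent to the places inside `M x`, so Boolean literals hold place-wise. For a literal `x = y ⊗ z`
and `u ∈ M y`, `v ∈ M z`, the node formed by the places of `u` and `v` targets the place of
`{u, v}`; (c1)–(c3) hold because whether `{u, v} ∈ M x` depends only on the places of `u` and
`v`. Accessibility follows by ∈-induction on a realizing element `a`: either `a` lies in the
left-hand side of no ⊗-literal, and then nothing targets its place, or `a = {u, v}` and its place
is targeted by the node of the places of `u` and `v`.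
-/

theorem _root_.ZFSet.pair_eq_pair_iff {u v a b : ZFSet} :
    ({u, v} : ZFSet) = {a, b} ↔ u = a ∧ v = b ∨ u = b ∧ v = a := by
  rw [← SetLike.coe_set_eq, ZFSet.coe_insert, ZFSet.coe_singleton, ZFSet.coe_insert,
    ZFSet.coe_singleton, Set.pair_eq_pair_iff]

theorem _root_.ZFSet.pair_comm (u v : ZFSet) : ({u, v} : ZFSet) = {v, u} :=
  ZFSet.pair_eq_pair_iff.mpr (Or.inr ⟨rfl, rfl⟩)

theorem Lit.mem_of_sat_eqUprod {V : Type} {M : V → ZFSet} {x y z : V}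
    (h : Lit.Sat M (.eqUprod x y z)) {w : ZFSet} :
    w ∈ M x ↔ ∃ u ∈ M y, ∃ v ∈ M z, w = ({u, v} : ZFSet) :=
  Set.ext_iff.mp h w

theorem Lit.pair_mem_of_sat_eqUprod {V : Type} {M : V → ZFSet} {x y z : V}
    (h : Lit.Sat M (.eqUprod x y z)) {u v : ZFSet} :
    ({u, v} : ZFSet) ∈ M x ↔ u ∈ M y ∧ v ∈ M z ∨ u ∈ M z ∧ v ∈ M y := by
  rw [Lit.mem_of_sat_eqUprod h]
  constructor
  · rintro ⟨a, ha, b, hb, huv⟩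
    rcases ZFSet.pair_eq_pair_iff.mp huv with ⟨rfl, rfl⟩ | ⟨rfl, rfl⟩
    exacts [.inl ⟨ha, hb⟩, .inr ⟨hb, ha⟩]
  · rintro (⟨hu, hv⟩ | ⟨hu, hv⟩)
    exacts [⟨u, hu, v, hv, rfl⟩, ⟨v, hv, u, hu, ZFSet.pair_comm u v⟩]

section Venn

variable {V : Type} (M : V → ZFSet)

def vennRegion (a : ZFSet) : Set V := {v | a ∈ M v}

def vennRegions : Set (Set V) := vennRegion M '' {a | ∃ v, a ∈ M v}

def vennPlace {a : ZFSet} {v : V} (h : a ∈ M v) : vennRegions M :=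
  ⟨vennRegion M a, a, ⟨v, h⟩, rfl⟩

def vennFulfilling (x : V) : Set (vennRegions M) := {ρ | x ∈ ρ.val}

/-- Targets are given by their region: `{u, v}` has a place only when `M` models `Φ`. -/
def vennTarget (Φ : List (Lit V)) (A : Set (vennRegions M)) : Set (vennRegions M) :=
  {ρ | ∃ x y z, Lit.eqUprod x y z ∈ Φ ∧ ∃ u v : ZFSet, ∃ (hu : u ∈ M y) (hv : v ∈ M z),
    A = {vennPlace M hu, vennPlace M hv} ∧ ρ.val = vennRegion M {u, v}}

variable {M}

theorem vennPlace_mem_vennFulfilling {a : ZFSet} {v x : V} (h : a ∈ M v) :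
    vennPlace M h ∈ vennFulfilling M x ↔ a ∈ M x :=
  Iff.rfl

theorem vennPlace_eq_iff {a b : ZFSet} {v w : V} (ha : a ∈ M v) (hb : b ∈ M w) :
    vennPlace M ha = vennPlace M hb ↔ ∀ x, a ∈ M x ↔ b ∈ M x :=
  Subtype.ext_iff.trans Set.ext_iff

theorem vennPlace_surjective (ρ : vennRegions M) :
    ∃ a v, ∃ h : a ∈ M v, vennPlace M h = ρ := by
  obtain ⟨_, a, ⟨v, h⟩, rfl⟩ := ρ
  exact ⟨a, v, h, rfl⟩

theorem vennFulfilling_eq_union {x y z : V} (h : M x = M y ∪ M z) :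
    vennFulfilling M x = vennFulfilling M y ∪ vennFulfilling M z := by
  ext ρ
  obtain ⟨a, v, ha, rfl⟩ := vennPlace_surjective ρ
  simp only [Set.mem_union, vennPlace_mem_vennFulfilling, h, ZFSet.mem_union]

theorem vennFulfilling_eq_sdiff {x y z : V} (h : M x = M y \ M z) :
    vennFulfilling M x = vennFulfilling M y \ vennFulfilling M z := by
  ext ρ
  obtain ⟨a, v, ha, rfl⟩ := vennPlace_surjective ρ
  simp only [Set.mem_sdiff, vennPlace_mem_vennFulfilling, h, ZFSet.mem_sdiff]

theorem eq_of_vennFulfilling_eq {x y : V} (h : vennFulfilling M x = vennFulfilling M y) :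
    M x = M y :=
  ZFSet.ext fun _ => ⟨fun ha => (Set.ext_iff.mp h (vennPlace M ha)).mp ha,
    fun ha => (Set.ext_iff.mp h (vennPlace M ha)).mpr ha⟩

theorem vennRegions_subset_nonempty : vennRegions M ⊆ {σ | σ.Nonempty} := by
  rintro _ ⟨a, ⟨v, h⟩, rfl⟩
  exact ⟨v, h⟩

variable (M) in
theorem card_vennRegions_le [Finite V] : Nat.card (vennRegions M) ≤ 2 ^ Nat.card V - 1 := by
  have : Fintype V := Fintype.ofFinite V
  calc Nat.card (vennRegions M) = (vennRegions M).ncard := Nat.card_coe_set_eq _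
    _ ≤ ({∅}ᶜ : Set (Set V)).ncard :=
      Set.ncard_le_ncard fun _ hσ =>
        Set.nonempty_iff_ne_empty.mp (vennRegions_subset_nonempty hσ)
    _ = 2 ^ Nat.card V - 1 := by
      rw [Set.ncard_compl, Set.ncard_singleton, Nat.card_eq_fintype_card, Fintype.card_set,
        Nat.card_eq_fintype_card]

end Venn

section Graph

variable {V : Type} {M : V → ZFSet} {Φ : List (Lit V)}

theorem vennTarget_eq_empty_of_notMem_nodesOf {A : Set (vennRegions M)}
    (hA : A ∉ NodesOf (vennRegions M)) : vennTarget M Φ A = ∅ := by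
  refine Set.eq_empty_of_forall_notMem ?_
  rintro ρ ⟨_, _, _, _, u, v, hu, hv, hAuv, _⟩
  exact hA ⟨_, _, hAuv⟩

theorem accessible_vennTarget (hM : ∀ l ∈ Φ, Lit.Sat M l) (ρ : vennRegions M) :
    Accessible (vennTarget M Φ) ρ := by
  obtain ⟨a, v, h, rfl⟩ := vennPlace_surjective ρ
  induction a using ZFSet.inductionOn generalizing v with
  | _ a IH =>
  by_cases hpair : ∃ x y z, Lit.eqUprod x y z ∈ Φ ∧ a ∈ M x
  · obtain ⟨x, y, z, hl, hax⟩ := hpair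
    obtain ⟨u, hu, w, hw, rfl⟩ := (Lit.mem_of_sat_eqUprod (hM _ hl)).mp hax
    refine .step _ {vennPlace M hu, vennPlace M hw} ⟨_, _, rfl⟩ ?_
      ⟨x, y, z, hl, u, w, hu, hw, rfl, rfl⟩
    rintro _ (rfl | rfl)
    · exact IH u (ZFSet.mem_pair.mpr (.inl rfl)) y hu
    · exact IH w (ZFSet.mem_pair.mpr (.inr rfl)) z hw
  · refine .source _ fun A _ ⟨x, y, z, hl, u, w, hu, hw, _, hρ⟩ => hpair ⟨x, y, z, hl, ?_⟩
    have huw : ({u, w} : ZFSet) ∈ M x :=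
      (Lit.mem_of_sat_eqUprod (hM _ hl)).mpr ⟨u, hu, w, hw, rfl⟩
    exact (Set.ext_iff.mp hρ x).mpr huw

section EqUprod

variable {x y z : V} (hsat : Lit.Sat M (.eqUprod x y z))
include hsat

theorem vennTarget_pair_nonempty (hl : Lit.eqUprod x y z ∈ Φ) {υ ζ : vennRegions M}
    (hυ : υ ∈ vennFulfilling M y) (hζ : ζ ∈ vennFulfilling M z) :
    (vennTarget M Φ {υ, ζ}).Nonempty := by
  obtain ⟨a, _, _, rfl⟩ := vennPlace_surjective υ
  obtain ⟨b, _, _, rfl⟩ := vennPlace_surjective ζ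
  have hab : ({a, b} : ZFSet) ∈ M x := (Lit.pair_mem_of_sat_eqUprod hsat).mpr (.inl ⟨hυ, hζ⟩)
  exact ⟨vennPlace M hab, x, y, z, hl, a, b, hυ, hζ, rfl, rfl⟩

theorem vennTarget_pair_subset {υ ζ : vennRegions M}
    (hυ : υ ∈ vennFulfilling M y) (hζ : ζ ∈ vennFulfilling M z) :
    vennTarget M Φ {υ, ζ} ⊆ vennFulfilling M x := by
  obtain ⟨a, _, ha, rfl⟩ := vennPlace_surjective υ
  obtain ⟨b, _, hb, rfl⟩ := vennPlace_surjective ζ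
  rintro ρ ⟨_, _, _, _, u, w, hu, hw, hA, hρ⟩
  change x ∈ ρ.val
  rw [hρ]
  refine (Lit.pair_mem_of_sat_eqUprod hsat).mpr ?_
  rcases Set.pair_eq_pair_iff.mp hA with ⟨hau, hbw⟩ | ⟨haw, hbu⟩
  · exact .inl ⟨((vennPlace_eq_iff ha hu).mp hau y).mp hυ,
      ((vennPlace_eq_iff hb hw).mp hbw z).mp hζ⟩
  · exact .inr ⟨((vennPlace_eq_iff hb hu).mp hbu z).mp hζ,
      ((vennPlace_eq_iff ha hw).mp haw y).mp hυ⟩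

theorem vennFulfilling_subset_iUnion_vennTarget (hl : Lit.eqUprod x y z ∈ Φ) :
    vennFulfilling M x ⊆
      ⋃ A ∈ setUprod (vennFulfilling M y) (vennFulfilling M z), vennTarget M Φ A := by
  intro ρ hρ
  obtain ⟨c, _, _, rfl⟩ := vennPlace_surjective ρ
  obtain ⟨a, ha, b, hb, rfl⟩ := (Lit.mem_of_sat_eqUprod hsat).mp hρ
  exact Set.mem_biUnion ⟨vennPlace M ha, ha, vennPlace M hb, hb, rfl⟩
    ⟨x, y, z, hl, a, b, ha, hb, rfl, rfl⟩

theorem iUnion_vennTarget_inter_vennFulfilling_eq_empty :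
    (⋃ A ∈ NodesOf (vennRegions M) \ setUprod (vennFulfilling M y) (vennFulfilling M z),
      vennTarget M Φ A) ∩ vennFulfilling M x = ∅ := by
  refine Set.eq_empty_of_forall_notMem ?_
  rintro ρ ⟨hρA, hρx⟩
  obtain ⟨A, ⟨_, hA⟩, _, _, _, _, u, w, hu, hw, rfl, hρ⟩ := Set.mem_iUnion₂.mp hρA
  have huw : ({u, w} : ZFSet) ∈ M x := by
    change x ∈ ρ.val at hρx
    rwa [hρ] at hρx
  rcases (Lit.pair_mem_of_sat_eqUprod hsat).mp huw with ⟨huy, hwz⟩ | ⟨huz, hwy⟩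
  · exact hA ⟨_, huy, _, hwz, rfl⟩
  · exact hA ⟨_, hwy, _, huz, Set.pair_comm _ _⟩

end EqUprod

theorem fulfills_vennTarget (hM : ∀ l ∈ Φ, Lit.Sat M l) :
    Fulfills (vennTarget M Φ) (vennFulfilling M) Φ := by
  intro l hl
  have hsat := hM l hl
  cases l with
  | eqUnion x y z => exact vennFulfilling_eq_union hsat
  | eqDiff x y z => exact vennFulfilling_eq_sdiff hsat
  | ne x y => exact fun h => hsat (eq_of_vennFulfilling_eq h)
  | eqUprod x y z =>
    exact ⟨fun υ hυ ζ hζ => ⟨vennTarget_pair_nonempty hsat hl hυ hζ,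
      vennTarget_pair_subset hsat hυ hζ⟩, vennFulfilling_subset_iUnion_vennTarget hsat hl,
      iUnion_vennTarget_inter_vennFulfilling_eq_empty hsat⟩

end Graph

/-- every satisfiable BST⊗-conjunction with `n` distinct variables is
fulfilled by an accessible ⊗-graph of size at most `2^n - 1`. -/
theorem stmt13 {n : ℕ} (Φ : List (Lit (Fin n)))
    (hsat : ∃ M : Fin n → ZFSet, ∀ l ∈ Φ, Lit.Sat M l) :
    ∃ (P : Type) (T : Set P → Set P),
      Finite P ∧ Nat.card P ≤ 2 ^ n - 1 ∧ (∀ A, A ∉ NodesOf P → T A = ∅) ∧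
      (∀ p : P, Accessible T p) ∧ ∃ F : Fin n → Set P, Fulfills T F Φ := by
  obtain ⟨M, hM⟩ := hsat
  refine ⟨vennRegions M, vennTarget M Φ, inferInstance, ?_,
    fun _ => vennTarget_eq_empty_of_notMem_nodesOf, accessible_vennTarget hM,
    vennFulfilling M, fulfills_vennTarget hM⟩
  simpa using card_vennRegions_le M

end BSTO
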